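/- Let θ1 ~ N(μ, σ²) with σ > 0. Then E[(θ1)₊] + E[θ1] ≥ 0 if and only if μ/σ ≥ x̄, where x̄ is the unique root of x·Φ(x) + φ(x) + x. Consequently the R²-optimal one-armed policy pulls the unknown arm with probability 1 exactly when μ/σ ≥ x̄ ≈ −0.276. -/

import Mathlib

open MeasureTheory ProbabilityTheory
open Real Set Filter
open scoped NNReal ENNReal

noncomputable def stdphi (x : ℝ) : ℝ := Real.exp (-x ^ 2 / 2) / Real.sqrt (2 * Real.pi)

noncomputable def stdPhi (x : ℝ) : ℝ := ∫ t in Set.Iic x, stdphi t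

lemma stdphi_eq (x : ℝ) : stdphi x = (Real.sqrt (2 * Real.pi))⁻¹ * Real.exp (-(1/2) * x ^ 2) := by
  rw [stdphi]; ring_nf

lemma stdphi_nonneg (x : ℝ) : 0 ≤ stdphi x := by
  rw [stdphi]; positivity

lemma stdphi_even (x : ℝ) : stdphi (-x) = stdphi x := by
  simp [stdphi]

lemma continuous_stdphi : Continuous stdphi := by
  unfold stdphi; fun_prop

lemma integrable_stdphi : Integrable stdphi := by
  rw [funext stdphi_eq]
  exact (integrable_exp_neg_mul_sq (by norm_num : (0:ℝ) < 1/2)).const_mul _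

lemma integrable_mul_stdphi : Integrable (fun t => t * stdphi t) := by
  have := (integrable_mul_exp_neg_mul_sq (by norm_num : (0:ℝ) < 1/2)).const_mul
      (Real.sqrt (2 * Real.pi))⁻¹
  refine this.congr ?_
  filter_upwards with t
  rw [stdphi_eq]; ring

lemma hasDerivAt_neg_stdphi (x : ℝ) :
    HasDerivAt (fun t => -stdphi t) (x * stdphi x) x := by
  have h1 : HasDerivAt (fun t : ℝ => -t ^ 2 / 2) (-x) x := by
    have := ((hasDerivAt_pow 2 x).neg).div_const 2
    simpa using this.congr_deriv (by ring)
  have h2 := (h1.exp).div_const (Real.sqrt (2 * Real.pi))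
  have h3 := h2.neg
  refine h3.congr_deriv ?_
  rw [stdphi]; ring

lemma tendsto_neg_stdphi : Tendsto (fun t => -stdphi t) atTop (nhds 0) := by
  have h0 : Tendsto (fun t : ℝ => t ^ 2 / 2) atTop atTop :=
    (tendsto_pow_atTop (two_ne_zero)).atTop_div_const (by norm_num)
  have h1 : Tendsto (fun t : ℝ => -t ^ 2 / 2) atTop atBot :=
    (tendsto_neg_atTop_atBot.comp h0).congr (fun x => by simp [Function.comp]; ring)
  have h2 : Tendsto stdphi atTop (nhds 0) := by
    have := (Real.tendsto_exp_atBot.comp h1).div_const (Real.sqrt (2 * Real.pi))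
    rw [zero_div] at this
    refine this.congr (fun x => ?_)
    simp [stdphi, Function.comp]
  simpa using h2.neg

lemma integral_Ioi_mul_stdphi (a : ℝ) : ∫ t in Set.Ioi a, t * stdphi t = stdphi a := by
  have := integral_Ioi_of_hasDerivAt_of_tendsto
    (f := fun t => -stdphi t) (f' := fun t => t * stdphi t) (a := a) (m := 0)
    ((continuous_stdphi.neg).continuousWithinAt)
    (fun x _ => hasDerivAt_neg_stdphi x)
    (integrable_mul_stdphi.integrableOn)
    tendsto_neg_stdphi
  simpa using this

lemma integral_Ici_mul_stdphi (a : ℝ) : ∫ t in Set.Ici a, t * stdphi t = stdphi a := by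
  rw [integral_Ici_eq_integral_Ioi, integral_Ioi_mul_stdphi]

lemma integral_Ici_stdphi (a : ℝ) : ∫ t in Set.Ici a, stdphi t = stdPhi (-a) := by
  have h := integral_comp_neg_Iic (-a) stdphi
  simp only [stdphi_even, neg_neg] at h
  rw [integral_Ici_eq_integral_Ioi, stdPhi, h]

lemma integral_stdphi : ∫ t, stdphi t = 1 := by
  have h := integral_gaussianPDFReal_eq_one 0 (v := 1) one_ne_zero
  rw [← h]
  congr 1
  ext x
  rw [gaussianPDFReal, stdphi]
  push_cast
  rw [div_eq_inv_mul]
  ring_nf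

lemma integral_id_stdphi : ∫ t, t * stdphi t = 0 := by
  have h1 := intervalIntegral.integral_Iic_add_Ioi (b := (0:ℝ)) (μ := volume)
    (integrable_mul_stdphi.integrableOn) (integrable_mul_stdphi.integrableOn)
  rw [integral_Ioi_mul_stdphi] at h1
  have h2 : ∫ t in Set.Iic (0:ℝ), t * stdphi t = -stdphi 0 := by
    have h := integral_comp_neg_Iic (0:ℝ) (fun t => t * stdphi t)
    simp only [stdphi_even, neg_zero, neg_mul] at h
    rw [integral_neg, integral_Ioi_mul_stdphi] at h
    linarith
  rw [← h1, h2]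
  ring

lemma stdPhi_nonneg (x : ℝ) : 0 ≤ stdPhi x :=
  setIntegral_nonneg measurableSet_Iic (fun t _ => stdphi_nonneg t)

lemma hasDerivAt_stdPhi (x : ℝ) : HasDerivAt stdPhi (stdphi x) x := by
  have heq : stdPhi = fun y => stdPhi 0 + ∫ t in (0:ℝ)..y, stdphi t := by
    funext y
    rw [← intervalIntegral.integral_Iic_sub_Iic (integrable_stdphi.integrableOn)
      (integrable_stdphi.integrableOn)]
    simp [stdPhi]
  rw [heq]
  have h := intervalIntegral.integral_hasDerivAt_right (a := 0) (b := x) (f := stdphi)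
    (integrable_stdphi.intervalIntegrable)
    (continuous_stdphi.stronglyMeasurableAtFilter _ _)
    (continuous_stdphi.continuousAt)
  simpa using h.const_add (stdPhi 0)

noncomputable def gfun (x : ℝ) : ℝ := x * stdPhi x + stdphi x + x

lemma hasDerivAt_gfun (x : ℝ) : HasDerivAt gfun (stdPhi x + 1) x := by
  have h1 := (hasDerivAt_id x).mul (hasDerivAt_stdPhi x)
  have h2 := (hasDerivAt_neg_stdphi x).neg
  replace h2 : HasDerivAt stdphi (-(x * stdphi x)) x := by
    have e : (-fun t => -stdphi t) = stdphi := by funext t; simp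
    rw [e] at h2; exact h2
  have h3 := (h1.add h2).add (hasDerivAt_id x)
  refine (h3.congr_deriv ?_ : HasDerivAt gfun _ x)
  simp only [id]
  ring

lemma strictMono_gfun : StrictMono gfun := by
  apply strictMono_of_deriv_pos
  intro x
  rw [(hasDerivAt_gfun x).deriv]
  have := stdPhi_nonneg x
  linarith

lemma gaussianPDFReal_eq (μ σ : ℝ) (hσ : 0 < σ) (x : ℝ) :
    gaussianPDFReal μ (Real.toNNReal (σ ^ 2)) x = stdphi ((x - μ) * σ⁻¹) * σ⁻¹ := by
  have hσ' : σ ≠ 0 := hσ.ne'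
  rw [gaussianPDFReal, stdphi, Real.coe_toNNReal _ (sq_nonneg σ),
    show 2 * Real.pi * σ ^ 2 = (2 * Real.pi) * σ ^ 2 by ring,
    Real.sqrt_mul (by positivity) (σ ^ 2), Real.sqrt_sq hσ.le,
    show -((x - μ) * σ⁻¹) ^ 2 / 2 = -(x - μ) ^ 2 / (2 * σ ^ 2) by rw [mul_pow, inv_pow]; ring,
    mul_inv]
  ring

lemma integral_gauss (μ σ : ℝ) (hσ : 0 < σ) (f : ℝ → ℝ) :
    ∫ x, f x ∂(gaussianReal μ (Real.toNNReal (σ ^ 2)))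
      = ∫ t, f (σ * t + μ) * stdphi t := by
  have hσ' : σ ≠ 0 := hσ.ne'
  have hv : Real.toNNReal (σ ^ 2) ≠ 0 := by
    simp only [ne_eq, Real.toNNReal_eq_zero, not_le]
    positivity
  rw [gaussianReal_of_var_ne_zero μ hv]
  have hpdf : gaussianPDF μ (Real.toNNReal (σ ^ 2))
      = fun x => ((Real.toNNReal (gaussianPDFReal μ (Real.toNNReal (σ ^ 2)) x) : ℝ≥0) : ℝ≥0∞) :=
    rfl
  rw [hpdf, integral_withDensity_eq_integral_smul
    ((measurable_gaussianPDFReal μ _).real_toNNReal) f]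
  have h1 : ∀ x : ℝ, (Real.toNNReal (gaussianPDFReal μ (Real.toNNReal (σ ^ 2)) x) : ℝ≥0) • f x
      = (fun y => f (σ * y + μ) * stdphi y * σ⁻¹) (σ⁻¹ * (x - μ)) := by
    intro x
    rw [NNReal.smul_def, Real.coe_toNNReal _ (gaussianPDFReal_nonneg _ _ x), smul_eq_mul,
      gaussianPDFReal_eq μ σ hσ x]
    simp only
    rw [show σ * (σ⁻¹ * (x - μ)) + μ = x by field_simp; ring]
    ring_nf
  simp_rw [h1]
  rw [integral_sub_right_eq_self (fun y => (fun y => f (σ * y + μ) * stdphi y * σ⁻¹) (σ⁻¹ * y)) μ,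
    MeasureTheory.Measure.integral_comp_mul_left (fun y => f (σ * y + μ) * stdphi y * σ⁻¹) σ⁻¹,
    inv_inv, abs_of_pos hσ]
  rw [MeasureTheory.integral_mul_const, smul_eq_mul]
  field_simp

lemma integral_id_gauss (μ σ : ℝ) (hσ : 0 < σ) :
    ∫ x, x ∂(gaussianReal μ (Real.toNNReal (σ ^ 2))) = μ := by
  rw [integral_gauss μ σ hσ (fun x => x)]
  have h1 : ∀ t : ℝ, (σ * t + μ) * stdphi t = σ * (t * stdphi t) + μ * stdphi t := by
    intro t; ring
  simp_rw [h1]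
  rw [MeasureTheory.integral_add ((integrable_mul_stdphi.const_mul σ))
    (integrable_stdphi.const_mul μ), MeasureTheory.integral_const_mul,
    MeasureTheory.integral_const_mul, integral_stdphi, integral_id_stdphi]
  ring

lemma integrable_affine_stdphi (μ σ : ℝ) : Integrable (fun t => (σ * t + μ) * stdphi t) := by
  refine ((integrable_mul_stdphi.const_mul σ).add (integrable_stdphi.const_mul μ)).congr ?_
  filter_upwards with t
  simp only [Pi.add_apply]
  ring

lemma integral_max_gauss (μ σ : ℝ) (hσ : 0 < σ) :
    ∫ x, max x 0 ∂(gaussianReal μ (Real.toNNReal (σ ^ 2)))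
      = σ * stdphi (μ / σ) + μ * stdPhi (μ / σ) := by
  have hσ' : σ ≠ 0 := hσ.ne'
  rw [integral_gauss μ σ hσ (fun x => max x 0)]
  set a : ℝ := -(μ / σ) with ha
  have hmax : ∀ t : ℝ, (fun x => max x 0) (σ * t + μ) * stdphi t
      = max ((σ * t + μ) * stdphi t) 0 := by
    intro t
    simp only
    rw [max_mul_of_nonneg _ _ (stdphi_nonneg t), zero_mul]
  simp_rw [hmax]
  have hInt : Integrable (fun t => max ((σ * t + μ) * stdphi t) 0) :=
    (integrable_affine_stdphi μ σ).pos_part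
  rw [← intervalIntegral.integral_Iio_add_Ici (b := a) hInt.integrableOn hInt.integrableOn]
  have hzero : ∫ t in Set.Iio a, max ((σ * t + μ) * stdphi t) 0 = 0 := by
    rw [setIntegral_congr_fun measurableSet_Iio (g := fun _ => (0:ℝ)) ?_, integral_zero]
    intro t ht
    have h1 : σ * t + μ < 0 := by
      have : t < -(μ / σ) := ht
      have h2 : σ * t < σ * (-(μ / σ)) := by exact (mul_lt_mul_iff_right₀ hσ).mpr this
      rw [mul_neg, mul_div_cancel₀ _ hσ'] at h2
      linarith
    have h3 : (σ * t + μ) * stdphi t ≤ 0 :=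
      mul_nonpos_of_nonpos_of_nonneg h1.le (stdphi_nonneg t)
    simp [max_eq_right h3]
  have hici : ∫ t in Set.Ici a, max ((σ * t + μ) * stdphi t) 0
      = σ * stdphi (μ / σ) + μ * stdPhi (μ / σ) := by
    rw [setIntegral_congr_fun measurableSet_Ici
      (g := fun t => σ * (t * stdphi t) + μ * stdphi t) ?_]
    · rw [MeasureTheory.integral_add ((integrable_mul_stdphi.const_mul σ).integrableOn)
        ((integrable_stdphi.const_mul μ).integrableOn),
        MeasureTheory.integral_const_mul, MeasureTheory.integral_const_mul,
        integral_Ici_mul_stdphi, integral_Ici_stdphi]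
      rw [ha, neg_neg]
      rw [show stdphi (-(μ / σ)) = stdphi (μ / σ) from stdphi_even _]
    · intro t ht
      have h1 : 0 ≤ σ * t + μ := by
        have : -(μ / σ) ≤ t := ht
        have h2 : σ * (-(μ / σ)) ≤ σ * t := (mul_le_mul_iff_right₀ hσ).mpr this
        rw [mul_neg, mul_div_cancel₀ _ hσ'] at h2
        linarith
      have h3 : 0 ≤ (σ * t + μ) * stdphi t := mul_nonneg h1 (stdphi_nonneg t)
      show max ((σ * t + μ) * stdphi t) 0 = σ * (t * stdphi t) + μ * stdphi t
      rw [max_eq_left h3]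
      ring
  rw [hzero, hici, zero_add]

theorem stmt_12 (μ σ : ℝ) (hσ : 0 < σ) (xbar : ℝ)
    (hroot : xbar * stdPhi xbar + stdphi xbar + xbar = 0) :
    0 ≤ (∫ x, max x 0 ∂(gaussianReal μ (Real.toNNReal (σ ^ 2))))
        + (∫ x, x ∂(gaussianReal μ (Real.toNNReal (σ ^ 2))))
      ↔ xbar ≤ μ / σ := by
  have hσ' : σ ≠ 0 := hσ.ne'
  rw [integral_max_gauss μ σ hσ, integral_id_gauss μ σ hσ]
  set x := μ / σ with hx
  have hμ : μ = σ * x := by rw [hx]; field_simp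
  have hsum : σ * stdphi x + μ * stdPhi x + μ = σ * gfun x := by
    rw [gfun, hμ]; ring
  rw [hsum]
  have hpos : 0 ≤ σ * gfun x ↔ 0 ≤ gfun x := by
    constructor
    · intro h
      by_contra hneg
      push_neg at hneg
      nlinarith [hneg, hσ]
    · intro h
      positivity
  rw [hpos]
  have hg : gfun xbar = 0 := by rw [gfun]; linarith
  rw [← hg]
  exact strictMono_gfun.le_iff_le
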